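/- For any m and n with n ≥ 1, the Chebyshev polynomial T_m agrees with T_{m'} at every point of the (n+1)-point Chebyshev grid, where m' = |((m + n) mod 2n) − n| (the aliased degree); that is, T_m(cos(jπ/n)) = T_{m'}(cos(jπ/n)) for all 0 ≤ j ≤ n. -/
import Mathlib


open Real Polynomial

theorem chebyshev_aliasing_on_grid (m n : ℕ) (hn : 1 ≤ n) (j : ℕ) (hj : j ≤ n) :
    (Polynomial.Chebyshev.T ℝ m).eval (Real.cos (j * π / n)) =
      (Polynomial.Chebyshev.T ℝ ((((m + n : ℤ) % (2 * n)) - n).natAbs)).eval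
        (Real.cos (j * π / n)) := by
  have hn0 : (n : ℝ) ≠ 0 := by
    exact_mod_cast Nat.one_le_iff_ne_zero.mp hn
  set θ : ℝ := (j : ℝ) * π / n with hθ
  rw [Polynomial.Chebyshev.T_real_cos, Polynomial.Chebyshev.T_real_cos]
  set M : ℤ := ((m + n : ℤ) % (2 * n)) - n with hM
  set k : ℤ := (m + n : ℤ) / (2 * n) with hk
  have hmM : (m : ℤ) = M + 2 * n * k := by
    rw [hM, hk, Int.emod_def]; ring
  have key : Real.cos ((m : ℝ) * θ) = Real.cos ((M : ℝ) * θ) := by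
    have hm : (m : ℝ) * θ = (M : ℝ) * θ + ((k * j : ℤ) : ℝ) * (2 * π) := by
      have h2 : ((m : ℝ)) = (M : ℝ) + 2 * n * k := by exact_mod_cast hmM
      push_cast
      rw [h2, hθ]
      field_simp
    rw [hm, Real.cos_add_int_mul_two_pi]
  have habs : Real.cos (|(M : ℝ)| * θ) = Real.cos ((M : ℝ) * θ) := by
    rcases le_or_gt 0 (M : ℝ) with h | h
    · rw [abs_of_nonneg h]
    · rw [abs_of_neg h, neg_mul, Real.cos_neg]
  push_cast
  rw [key, habs]
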